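/- arXiv:2010.05398 — 15 statements merged into one kernel-verified Lean document; each statement's English description precedes it below -/
import Mathlib

section
/- Let a > 0 and b, τ be real numbers, and define g₀(x) = -a x² + 2 b x. Then sup_{x ∈ ℝ} [ 𝟙_{x ≤ τ} + g₀(x) ] equals: 1 + g₀(b/a) if τ ≥ b/a; 1 + g₀(τ) if b/a − 1/√a < τ < b/a; and g₀(b/a) if τ ≤ b/a − 1/√a. -/
/-- Lemma 2.1: for `a > 0`, the supremum over `x ∈ ℝ` of the indicator `𝟙_{x ≤ τ}`
plus the quadratic `g₀(x) = -a x² + 2 b x` admits a three-case closed form. -/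
theorem stmt_0 (a b τ : ℝ) (ha : 0 < a) :
    (⨆ x : ℝ, (if x ≤ τ then (1 : ℝ) else 0) + (-a * x ^ 2 + 2 * b * x)) =
      if b / a ≤ τ then 1 + (-a * (b / a) ^ 2 + 2 * b * (b / a))
      else if b / a - 1 / Real.sqrt a < τ then 1 + (-a * τ ^ 2 + 2 * b * τ)
      else -a * (b / a) ^ 2 + 2 * b * (b / a) := by
  have ha' : a ≠ 0 := ne_of_gt ha
  set s := Real.sqrt a with hsdef
  have hs0 : 0 < s := Real.sqrt_pos.mpr ha
  have hs2 : s ^ 2 = a := Real.sq_sqrt ha.le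
  have has : a / s = s := by rw [← hs2, sq, mul_div_assoc, div_self hs0.ne', mul_one]
  have hgc : -a * (b / a) ^ 2 + 2 * b * (b / a) = b ^ 2 / a := by
    field_simp; ring
  have hbdd : BddAbove (Set.range fun x : ℝ =>
      (if x ≤ τ then (1 : ℝ) else 0) + (-a * x ^ 2 + 2 * b * x)) := by
    refine ⟨1 + b ^ 2 / a, ?_⟩
    rintro y ⟨x, rfl⟩
    have hg : -a * x ^ 2 + 2 * b * x ≤ b ^ 2 / a := by
      rw [le_div_iff₀ ha]
      nlinarith [sq_nonneg (b - a * x)]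
    dsimp only
    split <;> linarith
  split_ifs with h1 h2
  · -- b/a ≤ τ : sup = 1 + g(b/a)
    apply le_antisymm
    · apply ciSup_le
      intro x
      have hg : -a * x ^ 2 + 2 * b * x ≤ -a * (b / a) ^ 2 + 2 * b * (b / a) := by
        rw [hgc, le_div_iff₀ ha]
        nlinarith [sq_nonneg (b - a * x)]
      split <;> linarith
    · refine le_ciSup_of_le hbdd (b / a) ?_
      rw [if_pos h1]
  · -- b/a - 1/s < τ < b/a : sup = 1 + g(τ)
    push_neg at h1
    have hτ1 : a * τ < b := by
      rw [lt_div_iff₀ ha] at h1; linarith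
    have hτ2 : b < a * τ + s := by
      have hb : b / a < τ + 1 / s := by linarith
      rw [div_lt_iff₀ ha] at hb
      have : (τ + 1 / s) * a = a * τ + a / s := by ring
      rw [this, has] at hb
      linarith
    apply le_antisymm
    · apply ciSup_le
      intro x
      by_cases hx : x ≤ τ
      · rw [if_pos hx]
        have h0 : 0 ≤ 2 * b - a * τ - a * x := by nlinarith
        nlinarith [mul_nonneg (sub_nonneg.mpr hx) h0]
      · rw [if_neg hx]
        nlinarith [sq_nonneg (a * x - b),
          mul_pos (show 0 < s - (b - a * τ) by linarith)
            (show 0 < s + (b - a * τ) by linarith)]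
    · refine le_ciSup_of_le hbdd τ ?_
      rw [if_pos le_rfl]
  · -- τ ≤ b/a - 1/s : sup = g(b/a)
    push_neg at h1 h2
    have hτ2 : a * τ + s ≤ b := by
      have hb : τ + 1 / s ≤ b / a := by linarith
      rw [le_div_iff₀ ha] at hb
      have : (τ + 1 / s) * a = a * τ + a / s := by ring
      rw [this, has] at hb
      linarith
    apply le_antisymm
    · apply ciSup_le
      intro x
      rw [hgc]
      by_cases hx : x ≤ τ
      · rw [if_pos hx, le_div_iff₀ ha]
        have h3 : s ≤ b - a * x := by nlinarith
        nlinarith [mul_le_mul h3 h3 hs0.le (by linarith : (0:ℝ) ≤ b - a * x), hs2]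
      · rw [if_neg hx, le_div_iff₀ ha]
        nlinarith [sq_nonneg (b - a * x)]
    · refine le_ciSup_of_le hbdd (b / a) ?_
      rw [if_neg (not_le.mpr h1), zero_add]
end

section
/- Let a > 0 and b, τ be real numbers, and define g₀(x) = -a x² + 2 b x. Then sup_{x ∈ ℝ} [ 𝟙_{x ≥ τ} + g₀(x) ] equals: 1 + g₀(b/a) if τ ≤ b/a; 1 + g₀(τ) if b/a < τ < b/a + 1/√a; and g₀(b/a) if τ ≥ b/a + 1/√a. -/
/-- Lemma 2.2: for `a > 0`, the supremum over `x ∈ ℝ` of the indicator `𝟙_{x ≥ τ}`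
plus the quadratic `g₀(x) = -a x² + 2 b x` admits a three-case closed form. -/
theorem stmt_1 (a b τ : ℝ) (ha : 0 < a) :
    (⨆ x : ℝ, (if x ≥ τ then (1 : ℝ) else 0) + (-a * x ^ 2 + 2 * b * x)) =
      if τ ≤ b / a then 1 + (-a * (b / a) ^ 2 + 2 * b * (b / a))
      else if τ < b / a + 1 / Real.sqrt a then 1 + (-a * τ ^ 2 + 2 * b * τ)
      else -a * (b / a) ^ 2 + 2 * b * (b / a) := by
  have ha' : a ≠ 0 := ha.ne'
  have hs : 0 < Real.sqrt a := Real.sqrt_pos.2 ha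
  have hsa : Real.sqrt a ^ 2 = a := Real.sq_sqrt ha.le
  have hg : -a * (b / a) ^ 2 + 2 * b * (b / a) = b ^ 2 / a := by
    field_simp; ring
  have h2 : ∀ x : ℝ, -a * x ^ 2 + 2 * b * x ≤ b ^ 2 / a := by
    intro x
    rw [le_div_iff₀ ha]
    nlinarith [sq_nonneg (a * x - b)]
  have hbdd : BddAbove (Set.range fun x : ℝ =>
      (if x ≥ τ then (1 : ℝ) else 0) + (-a * x ^ 2 + 2 * b * x)) := by
    refine ⟨1 + b ^ 2 / a, ?_⟩
    rintro y ⟨x, rfl⟩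
    have h1 : (if x ≥ τ then (1 : ℝ) else 0) ≤ 1 := by split <;> norm_num
    have := h2 x
    simp only []
    linarith
  split_ifs with hc1 hc2
  · -- τ ≤ b/a : sup attained at b/a
    refine le_antisymm (ciSup_le fun x => ?_) ?_
    · have h1 : (if x ≥ τ then (1 : ℝ) else 0) ≤ 1 := by split <;> norm_num
      have := h2 x
      rw [hg]; linarith
    · refine le_trans ?_ (le_ciSup hbdd (b / a))
      simp only [ge_iff_le, if_pos hc1]
      exact le_rfl
  · -- b/a < τ < b/a + 1/√a : sup attained at τ
    push_neg at hc1
    have hdτ : b / a < τ := hc1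
    have hbτ : b < a * τ := by
      have := (div_lt_iff₀ ha).mp hc1
      linarith
    refine le_antisymm (ciSup_le fun x => ?_) ?_
    · by_cases hx : x ≥ τ
      · rw [if_pos hx]
        have hdec : -a * x ^ 2 + 2 * b * x ≤ -a * τ ^ 2 + 2 * b * τ := by
          nlinarith [mul_nonneg (sub_nonneg.2 hx) (by nlinarith : a * (x + τ) - 2 * b ≥ 0)]
        linarith
      · rw [if_neg hx]
        have hd : τ - b / a < 1 / Real.sqrt a := by linarith
        have hd0 : 0 < τ - b / a := by linarith
        have hlt : a * (τ - b / a) ^ 2 < 1 := by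
          have h1s : (τ - b / a) * Real.sqrt a < 1 := by
            rw [lt_div_iff₀ hs] at hd
            linarith
          nlinarith [mul_pos hd0 hs]
        have hq : b ^ 2 / a ≤ 1 + (-a * τ ^ 2 + 2 * b * τ) := by
          have : a * (τ - b / a) ^ 2 = a * τ ^ 2 - 2 * b * τ + b ^ 2 / a := by
            field_simp; ring
          rw [this] at hlt
          linarith
        have := h2 x
        linarith
    · refine le_trans ?_ (le_ciSup hbdd τ)
      simp only [ge_iff_le, if_pos (le_refl τ)]
      exact le_rfl
  · -- τ ≥ b/a + 1/√a : sup attained at b/a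
    push_neg at hc1 hc2
    have hd : τ - b / a ≥ 1 / Real.sqrt a := by linarith
    have hd0 : 0 < τ - b / a := lt_of_lt_of_le (by positivity) hd
    have hbτ : b < a * τ := by
      have := (div_lt_iff₀ ha).mp (by linarith : b / a < τ)
      linarith
    have hge : 1 ≤ a * (τ - b / a) ^ 2 := by
      have h1s : 1 ≤ (τ - b / a) * Real.sqrt a := by
        rw [ge_iff_le, div_le_iff₀ hs] at hd
        linarith
      nlinarith
    have hq : 1 + (-a * τ ^ 2 + 2 * b * τ) ≤ b ^ 2 / a := by
      have : a * (τ - b / a) ^ 2 = a * τ ^ 2 - 2 * b * τ + b ^ 2 / a := by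
        field_simp; ring
      rw [this] at hge
      linarith
    refine le_antisymm (ciSup_le fun x => ?_) ?_
    · rw [hg]
      by_cases hx : x ≥ τ
      · rw [if_pos hx]
        have hdec : -a * x ^ 2 + 2 * b * x ≤ -a * τ ^ 2 + 2 * b * τ := by
          nlinarith [mul_nonneg (sub_nonneg.2 hx) (by nlinarith : a * (x + τ) - 2 * b ≥ 0)]
        linarith
      · rw [if_neg hx]
        have := h2 x
        linarith
    · refine le_trans ?_ (le_ciSup hbdd (b / a))
      have hx : ¬ (b / a ≥ τ) := by
        push_neg
        linarith
      simp only [ge_iff_le, if_neg hx]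
      linarith
end

section
/- Let a > 0 and b, τ be real numbers, and define g₀(x) = -a x² + 2 b x. Then sup_{x ∈ ℝ} [ (τ − x)₊ + g₀(x) ] equals b²/a if τ ≤ b/a − 1/(4a), and equals τ + (b − 1/2)²/a if τ > b/a − 1/(4a). -/
/-!
Since `(τ - x)₊ + g₀(x) = max (τ - x + g₀(x)) (g₀(x))`, the supremum is the larger of the
maxima of two concave quadratics: `g₀` peaks at `x = b / a` with value `b² / a`, and
`τ - x + g₀(x) = τ - a x² + 2 (b - 1/2) x` peaks at `x = (b - 1/2) / a` with value
`τ + (b - 1/2)² / a`. The two values differ by `τ - (b / a - 1 / (4 a))`.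
-/

open Set

theorem isGreatest_range_add_neg_mul_sq_add {a : ℝ} (ha : 0 < a) (c d : ℝ) :
    IsGreatest (range fun x => d + (-a * x ^ 2 + 2 * c * x)) (d + c ^ 2 / a) := by
  refine ⟨⟨c / a, ?_⟩, ?_⟩
  · field_simp
    ring
  · rintro _ ⟨x, rfl⟩
    have hsq : 0 ≤ (a * x - c) ^ 2 / a := by positivity
    have hsplit : c ^ 2 / a = -a * x ^ 2 + 2 * c * x + (a * x - c) ^ 2 / a := by
      field_simp
      ring
    dsimp only
    linarith

theorem IsGreatest.range_max {ι α : Type*} [LinearOrder α] {f g : ι → α} {M N : α}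
    (hf : IsGreatest (range f) M) (hg : IsGreatest (range g) N) :
    IsGreatest (range fun i => max (f i) (g i)) (max M N) := by
  refine ⟨?_, ?_⟩
  · rcases le_total M N with hMN | hNM
    · obtain ⟨i, hi⟩ := hg.1
      refine ⟨i, ?_⟩
      simp only [hi, max_eq_right hMN]
      exact max_eq_right (hf.2 ⟨i, rfl⟩ |>.trans hMN)
    · obtain ⟨i, hi⟩ := hf.1
      refine ⟨i, ?_⟩
      simp only [hi, max_eq_left hNM]
      exact max_eq_left (hg.2 ⟨i, rfl⟩ |>.trans hNM)
  · rintro _ ⟨i, rfl⟩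
    exact max_le_max (hf.2 ⟨i, rfl⟩) (hg.2 ⟨i, rfl⟩)

/-- Lemma 2.3: for `a > 0`, the supremum over `x ∈ ℝ` of `(τ - x)₊ + g₀(x)` with
`g₀(x) = -a x² + 2 b x` admits a two-case closed form. -/
theorem stmt_2 (a b τ : ℝ) (ha : 0 < a) :
    (⨆ x : ℝ, max (τ - x) 0 + (-a * x ^ 2 + 2 * b * x)) =
      if τ ≤ b / a - 1 / (4 * a) then b ^ 2 / a
      else τ + (b - 1 / 2) ^ 2 / a := by
  have hmax : (fun x : ℝ => max (τ - x) 0 + (-a * x ^ 2 + 2 * b * x)) =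
      fun x => max (τ + (-a * x ^ 2 + 2 * (b - 1 / 2) * x)) (0 + (-a * x ^ 2 + 2 * b * x)) := by
    funext x
    rw [← max_add_add_right]
    congr 1; ring
  have hsup : (⨆ x : ℝ, max (τ - x) 0 + (-a * x ^ 2 + 2 * b * x)) =
      max (τ + (b - 1 / 2) ^ 2 / a) (0 + b ^ 2 / a) := by
    rw [iSup, hmax]
    exact ((isGreatest_range_add_neg_mul_sq_add ha _ τ).range_max
      (isGreatest_range_add_neg_mul_sq_add ha b 0)).csSup_eq
  have hgap : b ^ 2 / a = (b / a - 1 / (4 * a)) + (b - 1 / 2) ^ 2 / a := by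
    field_simp
    ring
  rw [hsup, zero_add, hgap, max_add_add_right]
  split_ifs with h
  · rw [max_eq_right h]
  · rw [max_eq_left (not_le.1 h).le]
end

section
/- Let a > 0 and b, τ be real numbers, and define g₀(x) = -a x² + 2 b x. Then sup_{x ∈ ℝ} [ (x − τ)₊ + g₀(x) ] equals b²/a if τ ≥ b/a + 1/(4a), and equals (b + 1/2)²/a − τ if τ < b/a + 1/(4a). -/
/-- Lemma 2.4: for `a > 0`, the supremum over `x ∈ ℝ` of `(x - τ)₊ + g₀(x)` with
`g₀(x) = -a x² + 2 b x` admits a two-case closed form. -/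
theorem stmt_3 (a b τ : ℝ) (ha : 0 < a) :
    (⨆ x : ℝ, max (x - τ) 0 + (-a * x ^ 2 + 2 * b * x)) =
      if b / a + 1 / (4 * a) ≤ τ then b ^ 2 / a
      else (b + 1 / 2) ^ 2 / a - τ := by
  have ha' : a ≠ 0 := ne_of_gt ha
  split_ifs with h
  · -- case τ ≥ b/a + 1/(4a)
    have hh : b + 1/4 ≤ τ * a := by
      have h2 : (b/a + 1/(4*a)) * a = b + 1/4 := by field_simp
      have := mul_le_mul_of_nonneg_right h ha.le
      rw [h2] at this
      exact this
    have hub : ∀ x : ℝ, max (x - τ) 0 + (-a * x ^ 2 + 2 * b * x) ≤ b^2/a := by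
      intro x
      rcases max_cases (x - τ) (0:ℝ) with ⟨he, hc⟩ | ⟨he, hc⟩ <;> rw [he]
      · rw [← sub_nonneg]
        have key : b^2/a - (x - τ + (-a*x^2 + 2*b*x))
            = ((a*x - (b+1/2))^2 + (τ*a - (b+1/4)))/a := by
          field_simp; ring
        rw [key]
        apply div_nonneg _ ha.le
        have := sq_nonneg (a*x - (b+1/2))
        linarith
      · rw [← sub_nonneg]
        have key : b^2/a - (0 + (-a*x^2 + 2*b*x)) = (a*x - b)^2/a := by
          field_simp; ring
        rw [key]
        positivity
    have hbdd : BddAbove (Set.range fun x : ℝ => max (x - τ) 0 + (-a * x ^ 2 + 2 * b * x)) := by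
      refine ⟨b^2/a, ?_⟩
      rintro _ ⟨x, rfl⟩
      exact hub x
    apply le_antisymm (ciSup_le hub)
    have hba : b / a ≤ τ := by
      rw [div_le_iff₀ ha]
      linarith
    have hval : max (b/a - τ) 0 + (-a * (b/a) ^ 2 + 2 * b * (b/a)) = b^2/a := by
      rw [max_eq_right (by linarith)]
      field_simp
      ring
    calc b^2/a = max (b/a - τ) 0 + (-a * (b/a) ^ 2 + 2 * b * (b/a)) := hval.symm
      _ ≤ ⨆ x : ℝ, max (x - τ) 0 + (-a * x ^ 2 + 2 * b * x) := le_ciSup hbdd (b/a)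
  · -- case τ < b/a + 1/(4a)
    push_neg at h
    have hh : τ * a < b + 1/4 := by
      have h2 : (b/a + 1/(4*a)) * a = b + 1/4 := by field_simp
      have := mul_lt_mul_of_pos_right h ha
      rw [h2] at this
      exact this
    have hub : ∀ x : ℝ, max (x - τ) 0 + (-a * x ^ 2 + 2 * b * x) ≤ (b + 1/2)^2/a - τ := by
      intro x
      rcases max_cases (x - τ) (0:ℝ) with ⟨he, hc⟩ | ⟨he, hc⟩ <;> rw [he]
      · rw [← sub_nonneg]
        have key : (b + 1/2)^2/a - τ - (x - τ + (-a*x^2 + 2*b*x))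
            = (a*x - (b+1/2))^2/a := by
          field_simp; ring
        rw [key]; positivity
      · rw [← sub_nonneg]
        have key : (b + 1/2)^2/a - τ - (0 + (-a*x^2 + 2*b*x))
            = ((a*x - b)^2 + ((b + 1/4) - τ*a))/a := by
          field_simp; ring
        rw [key]
        apply div_nonneg _ ha.le
        have := sq_nonneg (a*x - b)
        linarith
    have hbdd : BddAbove (Set.range fun x : ℝ => max (x - τ) 0 + (-a * x ^ 2 + 2 * b * x)) := by
      refine ⟨(b + 1/2)^2/a - τ, ?_⟩
      rintro _ ⟨x, rfl⟩
      exact hub x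
    apply le_antisymm (ciSup_le hub)
    set x₀ : ℝ := (b + 1/2)/a with hx₀
    have hτx : τ ≤ x₀ - 0 := by
      rw [hx₀, sub_zero, le_div_iff₀ ha]
      linarith
    have hval : max (x₀ - τ) 0 + (-a * x₀ ^ 2 + 2 * b * x₀) = (b + 1/2)^2/a - τ := by
      rw [max_eq_left (by linarith [hτx])]
      rw [hx₀]
      field_simp
      ring
    calc (b + 1/2)^2/a - τ = max (x₀ - τ) 0 + (-a * x₀ ^ 2 + 2 * b * x₀) := hval.symm
      _ ≤ ⨆ x : ℝ, max (x - τ) 0 + (-a * x ^ 2 + 2 * b * x) := le_ciSup hbdd x₀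
end

section
/- Let a > 1 and b, τ be real numbers, and define g₀(x) = -a x² + 2 b x. Then sup_{x ∈ ℝ} [ ((τ − x)₊)² + g₀(x) ] equals b²/a if τ ≤ b/a, and equals (b² − 2 b τ + a τ²)/(a − 1) if τ > b/a. -/
/-- Lemma 2.5: for `a > 1`, the supremum over `x ∈ ℝ` of `((τ - x)₊)² + g₀(x)` with
`g₀(x) = -a x² + 2 b x` admits a two-case closed form. -/
theorem stmt_4 (a b τ : ℝ) (ha : 1 < a) :
    (⨆ x : ℝ, (max (τ - x) 0) ^ 2 + (-a * x ^ 2 + 2 * b * x)) =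
      if τ ≤ b / a then b ^ 2 / a
      else (b ^ 2 - 2 * b * τ + a * τ ^ 2) / (a - 1) := by
  have ha0 : (0:ℝ) < a := by linarith
  have ha1 : (0:ℝ) < a - 1 := by linarith
  split_ifs with h
  · -- case τ ≤ b / a, i.e. a * τ ≤ b
    have hb : a * τ ≤ b := by
      rw [le_div_iff₀ ha0] at h; linarith [h]
    have hub : ∀ x : ℝ, (max (τ - x) 0) ^ 2 + (-a * x ^ 2 + 2 * b * x) ≤ b ^ 2 / a := by
      intro x
      rw [le_div_iff₀ ha0]
      rcases le_total (τ - x) 0 with hx | hx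
      · rw [max_eq_right hx]
        nlinarith [sq_nonneg (a * x - b)]
      · rw [max_eq_left hx]
        have htx : 0 ≤ τ - x := hx
        have hbτ : 0 ≤ b - a * τ := by linarith
        nlinarith [sq_nonneg (b - a * τ), mul_nonneg htx hbτ,
          mul_nonneg (mul_nonneg ha0.le htx) hbτ, sq_nonneg (τ - x),
          mul_nonneg (mul_nonneg ha1.le htx) htx]
    apply le_antisymm
    · exact ciSup_le hub
    · have hbdd : BddAbove (Set.range fun x : ℝ =>
          (max (τ - x) 0) ^ 2 + (-a * x ^ 2 + 2 * b * x)) := by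
        refine ⟨b ^ 2 / a, ?_⟩
        rintro _ ⟨x, rfl⟩
        exact hub x
      have hval : (max (τ - b / a) 0) ^ 2 + (-a * (b / a) ^ 2 + 2 * b * (b / a))
          = b ^ 2 / a := by
        rw [max_eq_right (by linarith)]
        field_simp
        ring
      calc b ^ 2 / a = _ := hval.symm
        _ ≤ _ := le_ciSup hbdd (b / a)
  · -- case τ > b / a, i.e. a * τ > b
    push_neg at h
    have hb : b < a * τ := by
      rw [div_lt_iff₀ ha0] at h; linarith [h]
    set V : ℝ := (b ^ 2 - 2 * b * τ + a * τ ^ 2) / (a - 1) with hV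
    have hub : ∀ x : ℝ, (max (τ - x) 0) ^ 2 + (-a * x ^ 2 + 2 * b * x) ≤ V := by
      intro x
      rw [hV, le_div_iff₀ ha1]
      rcases le_total (τ - x) 0 with hx | hx
      · rw [max_eq_right hx]
        have hxτ : 0 ≤ x - τ := by linarith
        have hbτ : 0 ≤ a * τ - b := by linarith
        nlinarith [sq_nonneg (a * x - b), sq_nonneg (a * τ - b),
          mul_nonneg hxτ hbτ, mul_nonneg (mul_nonneg ha0.le hxτ) hbτ,
          sq_nonneg (x - τ)]
      · rw [max_eq_left hx]
        nlinarith [sq_nonneg ((a - 1) * x - (b - τ))]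
    apply le_antisymm
    · exact ciSup_le hub
    · have hbdd : BddAbove (Set.range fun x : ℝ =>
          (max (τ - x) 0) ^ 2 + (-a * x ^ 2 + 2 * b * x)) := by
        refine ⟨V, ?_⟩
        rintro _ ⟨x, rfl⟩
        exact hub x
      have hx0 : τ - (b - τ) / (a - 1) = (a * τ - b) / (a - 1) := by
        field_simp; ring
      have hval : (max (τ - (b - τ) / (a - 1)) 0) ^ 2
          + (-a * ((b - τ) / (a - 1)) ^ 2 + 2 * b * ((b - τ) / (a - 1))) = V := by
        rw [hx0, max_eq_left (div_nonneg (by linarith) (by linarith)), hV]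
        field_simp
        ring
      calc V = _ := hval.symm
        _ ≤ _ := le_ciSup hbdd ((b - τ) / (a - 1))
end

section
/- Let a > 1 and b, τ be real numbers, and define g₀(x) = -a x² + 2 b x. Then sup_{x ∈ ℝ} [ ((x − τ)₊)² + g₀(x) ] equals b²/a if τ ≥ b/a, and equals (b² − 2 b τ + a τ²)/(a − 1) if τ < b/a. -/
/-- Lemma 2.6: for `a > 1`, the supremum over `x ∈ ℝ` of `((x - τ)₊)² + g₀(x)` with
`g₀(x) = -a x² + 2 b x` admits a two-case closed form. -/
theorem stmt_5 (a b τ : ℝ) (ha : 1 < a) :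
    (⨆ x : ℝ, (max (x - τ) 0) ^ 2 + (-a * x ^ 2 + 2 * b * x)) =
      if b / a ≤ τ then b ^ 2 / a
      else (b ^ 2 - 2 * b * τ + a * τ ^ 2) / (a - 1) := by
  have ha0 : (0:ℝ) < a := by linarith
  have ha1 : (0:ℝ) < a - 1 := by linarith
  set M := if b / a ≤ τ then b ^ 2 / a else (b ^ 2 - 2 * b * τ + a * τ ^ 2) / (a - 1) with hM
  have hub : ∀ x : ℝ, (max (x - τ) 0) ^ 2 + (-a * x ^ 2 + 2 * b * x) ≤ M := by
    intro x
    rcases le_or_gt x τ with h | h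
    · rw [max_eq_right (by linarith)]
      have h1 : -a * x ^ 2 + 2 * b * x ≤ b ^ 2 / a := by
        rw [le_div_iff₀ ha0]
        nlinarith [sq_nonneg (a * x - b)]
      rw [hM]
      split_ifs with hc
      · simpa using h1
      · have h2 : b ^ 2 / a ≤ (b ^ 2 - 2 * b * τ + a * τ ^ 2) / (a - 1) := by
          rw [div_le_div_iff₀ ha0 ha1]
          nlinarith [sq_nonneg (b - a * τ)]
        simpa using h1.trans h2
    · rw [max_eq_left (by linarith), hM]
      split_ifs with hc
      · have hb : b ≤ a * τ := by rw [div_le_iff₀ ha0] at hc; linarith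
        rw [le_div_iff₀ ha0]
        nlinarith [mul_nonneg (mul_nonneg ha0.le ha1.le) (sq_nonneg (x - τ)),
          mul_nonneg (mul_nonneg ha0.le (sub_nonneg.2 hb)) (sub_nonneg.2 h.le),
          sq_nonneg (a * τ - b)]
      · rw [le_div_iff₀ ha1]
        nlinarith [sq_nonneg ((a - 1) * x - (b - τ))]
  have hatt : ∃ x : ℝ, (max (x - τ) 0) ^ 2 + (-a * x ^ 2 + 2 * b * x) = M := by
    rw [hM]
    split_ifs with hc
    · refine ⟨b / a, ?_⟩
      rw [max_eq_right (by linarith)]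
      field_simp
      ring
    · push_neg at hc
      have hb : a * τ < b := by rw [lt_div_iff₀ ha0] at hc; linarith
      refine ⟨(b - τ) / (a - 1), ?_⟩
      rw [max_eq_left]
      · field_simp
        ring
      · rw [sub_nonneg, le_div_iff₀ ha1]
        nlinarith
  apply le_antisymm
  · exact ciSup_le hub
  · obtain ⟨x, hx⟩ := hatt
    rw [← hx]
    exact le_ciSup ⟨M, by rintro y ⟨x, rfl⟩; exact hub x⟩ x
end

section
/- Let a > 0 and b, τ be real numbers, and define g₀(x) = -a x² + 2 b x. Then sup_{x ∈ ℝ} [ 𝟙_{x ≤ τ} + g₀(x) ] = max( 1 + g₀(τ), 𝟙_{b/a ≤ τ} + g₀(b/a) ). -/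
/-- Lemma 3.1: for `a > 0`, with `g₀(x) = -a x² + 2 b x`,
`sup_x [𝟙_{x ≤ τ} + g₀(x)] = max(1 + g₀(τ), 𝟙_{b/a ≤ τ} + g₀(b/a))`. -/
theorem stmt_6 (a b τ : ℝ) (ha : 0 < a) :
    (⨆ x : ℝ, (if x ≤ τ then (1 : ℝ) else 0) + (-a * x ^ 2 + 2 * b * x)) =
      max (1 + (-a * τ ^ 2 + 2 * b * τ))
        ((if b / a ≤ τ then (1 : ℝ) else 0) + (-a * (b / a) ^ 2 + 2 * b * (b / a))) := by
  have ha' : a ≠ 0 := ha.ne'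
  have hab : a * (b / a) = b := by field_simp
  have key : ∀ x : ℝ, -a * x ^ 2 + 2 * b * x ≤ -a * (b/a) ^ 2 + 2 * b * (b/a) := by
    intro x
    have h : 0 ≤ a * (x - b/a) ^ 2 := by positivity
    have h1 : a * (b/a) * x = b * x := by rw [hab]
    have h2 : a * (b/a) * (b/a) = b * (b/a) := by rw [hab]
    nlinarith [h, h1, h2]
  have mono : ∀ x y : ℝ, x ≤ y → y ≤ b/a →
      -a * x ^ 2 + 2 * b * x ≤ -a * y ^ 2 + 2 * b * y := by
    intro x y hxy hy
    have h2 : a * y ≤ b := by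
      have := mul_le_mul_of_nonneg_left hy ha.le
      linarith [hab]
    have h3 : a * x ≤ b := by nlinarith
    nlinarith [mul_nonneg (sub_nonneg.mpr hxy) (sub_nonneg.mpr h2),
      mul_nonneg (sub_nonneg.mpr hxy) (sub_nonneg.mpr h3)]
  set M := max (1 + (-a * τ ^ 2 + 2 * b * τ))
      ((if b / a ≤ τ then (1 : ℝ) else 0) + (-a * (b / a) ^ 2 + 2 * b * (b / a))) with hM
  have hub : ∀ x : ℝ, (if x ≤ τ then (1 : ℝ) else 0) + (-a * x ^ 2 + 2 * b * x) ≤ M := by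
    intro x
    by_cases hx : x ≤ τ
    · simp only [hx, if_pos]
      by_cases hb : b / a ≤ τ
      · refine le_trans ?_ (le_max_right _ _)
        simp only [hb, if_pos]
        linarith [key x]
      · refine le_trans ?_ (le_max_left _ _)
        linarith [mono x τ hx (le_of_not_ge hb)]
    · simp only [hx, if_neg, not_false_iff]
      refine le_trans ?_ (le_max_right _ _)
      have : (0:ℝ) ≤ if b / a ≤ τ then (1:ℝ) else 0 := by positivity
      linarith [key x]
  have hbdd : BddAbove (Set.range fun x : ℝ =>
      (if x ≤ τ then (1 : ℝ) else 0) + (-a * x ^ 2 + 2 * b * x)) :=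
    ⟨M, by rintro y ⟨x, rfl⟩; exact hub x⟩
  apply le_antisymm
  · exact ciSup_le hub
  · apply max_le
    · have := le_ciSup hbdd τ
      simpa using this
    · exact le_ciSup hbdd (b/a)
end

section
/- Let a > 0 and b, τ be real numbers, and define g₀(x) = -a x² + 2 b x. Then sup_{x ∈ ℝ} [ (τ − x)₊ + g₀(x) ] = b²/a + ( τ − (b/a − 1/(4a)) )₊. -/
/-- Lemma 3.3: for `a > 0`, with `g₀(x) = -a x² + 2 b x`,
`sup_x [(τ - x)₊ + g₀(x)] = b²/a + (τ - (b/a - 1/(4a)))₊`. -/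
theorem stmt_8 (a b τ : ℝ) (ha : 0 < a) :
    (⨆ x : ℝ, max (τ - x) 0 + (-a * x ^ 2 + 2 * b * x)) =
      b ^ 2 / a + max (τ - (b / a - 1 / (4 * a))) 0 := by
  have ha' : a ≠ 0 := ne_of_gt ha
  set M := b ^ 2 / a + max (τ - (b / a - 1 / (4 * a))) 0 with hM
  have hub : ∀ x : ℝ, max (τ - x) 0 + (-a * x ^ 2 + 2 * b * x) ≤ M := by
    intro x
    rcases le_total (τ - x) 0 with h | h
    · rw [max_eq_right h]
      have h1 : -a * x ^ 2 + 2 * b * x ≤ b ^ 2 / a := by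
        rw [le_div_iff₀ ha]; nlinarith [sq_nonneg (a * x - b)]
      have h2 : (0:ℝ) ≤ max (τ - (b / a - 1 / (4 * a))) 0 := le_max_right _ _
      rw [hM]; linarith
    · rw [max_eq_left h]
      have h2 : τ - (b / a - 1 / (4 * a)) ≤ max (τ - (b / a - 1 / (4 * a))) 0 :=
        le_max_left _ _
      have h1 : τ - x + (-a * x ^ 2 + 2 * b * x) ≤ b ^ 2 / a + (τ - (b / a - 1 / (4 * a))) := by
        have e : b ^ 2 / a + (τ - (b / a - 1 / (4 * a))) = τ + (2*b-1)^2/(4*a) := by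
          field_simp; ring
        rw [e, ← sub_nonneg]
        have e2 : τ + (2*b-1)^2/(4*a) - (τ - x + (-a * x ^ 2 + 2 * b * x))
            = (2*a*x - (2*b-1))^2/(4*a) := by field_simp; ring
        rw [e2]; positivity
      rw [hM]; linarith
  have hbdd : BddAbove (Set.range fun x : ℝ =>
      max (τ - x) 0 + (-a * x ^ 2 + 2 * b * x)) := ⟨M, by rintro _ ⟨x, rfl⟩; exact hub x⟩
  apply le_antisymm (ciSup_le hub)
  rcases le_total τ (b / a - 1 / (4 * a)) with h | h
  · have hval : max (τ - (b/a)) 0 + (-a * (b/a) ^ 2 + 2 * b * (b/a)) = M := by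
      rw [hM, max_eq_right (by nlinarith [div_pos (by norm_num : (0:ℝ)<1) (by positivity : (0:ℝ) < 4*a)] : τ - b/a ≤ 0),
        max_eq_right (by linarith : τ - (b / a - 1 / (4 * a)) ≤ 0)]
      field_simp; ring
    calc M = _ := hval.symm
      _ ≤ _ := le_ciSup hbdd (b/a)
  · set x0 : ℝ := b/a - 1/(2*a) with hx0
    have hval : max (τ - x0) 0 + (-a * x0 ^ 2 + 2 * b * x0) = M := by
      have hx0le : x0 ≤ τ := by
        have : (0:ℝ) < 1/(4*a) := by positivity
        have h2 : 1/(2*a) = 2 * (1/(4*a)) := by field_simp; ring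
        rw [hx0]; linarith
      rw [hM, max_eq_left (by linarith : 0 ≤ τ - x0),
        max_eq_left (by linarith : 0 ≤ τ - (b / a - 1 / (4 * a))), hx0]
      field_simp; ring
    calc M = _ := hval.symm
      _ ≤ _ := le_ciSup hbdd x0
end

section
/- Let a > 0 and b, τ be real numbers, and define g₀(x) = -a x² + 2 b x. Then sup_{x ∈ ℝ} [ (x − τ)₊ + g₀(x) ] = b²/a + ( (b/a + 1/(4a)) − τ )₊. -/
/-- Lemma 3.4: for `a > 0`, with `g₀(x) = -a x² + 2 b x`,
`sup_x [(x - τ)₊ + g₀(x)] = b²/a + ((b/a + 1/(4a)) - τ)₊`. -/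
theorem stmt_9 (a b τ : ℝ) (ha : 0 < a) :
    (⨆ x : ℝ, max (x - τ) 0 + (-a * x ^ 2 + 2 * b * x)) =
      b ^ 2 / a + max ((b / a + 1 / (4 * a)) - τ) 0 := by
  have ha4 : (0:ℝ) < 4 * a := by linarith
  have hub : ∀ x : ℝ, max (x - τ) 0 + (-a * x ^ 2 + 2 * b * x) ≤
      b ^ 2 / a + max ((b / a + 1 / (4 * a)) - τ) 0 := by
    intro x
    rcases le_total (x - τ) 0 with h | h
    · rw [max_eq_right h]
      have h1 : -a * x ^ 2 + 2 * b * x ≤ b ^ 2 / a := by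
        rw [le_div_iff₀ ha]; nlinarith [sq_nonneg (a * x - b)]
      have h2 := le_max_right ((b / a + 1 / (4 * a)) - τ) 0
      linarith
    · rw [max_eq_left h]
      have h2 := le_max_left ((b / a + 1 / (4 * a)) - τ) 0
      have h1 : x + (-a * x ^ 2 + 2 * b * x) ≤ b ^ 2 / a + (b / a + 1 / (4 * a)) := by
        have he : b ^ 2 / a + (b / a + 1 / (4 * a)) = (2 * b + 1) ^ 2 / (4 * a) := by
          field_simp; ring
        rw [he, ← sub_nonneg, sub_nonneg, le_div_iff₀ ha4]
        nlinarith [sq_nonneg (2 * a * x - (2 * b + 1))]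
      linarith
  have hbdd : BddAbove (Set.range fun x : ℝ =>
      max (x - τ) 0 + (-a * x ^ 2 + 2 * b * x)) :=
    ⟨_, Set.forall_mem_range.mpr hub⟩
  apply le_antisymm
  · exact ciSup_le hub
  · by_cases hc : (b / a + 1 / (4 * a)) - τ ≤ 0
    · have h4 : (0:ℝ) < 1 / (4 * a) := by positivity
      have hx : max (b / a - τ) 0 + (-a * (b / a) ^ 2 + 2 * b * (b / a)) =
          b ^ 2 / a + max ((b / a + 1 / (4 * a)) - τ) 0 := by
        rw [max_eq_right (by linarith : b / a - τ ≤ 0), max_eq_right hc]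
        field_simp; ring
      calc b ^ 2 / a + max ((b / a + 1 / (4 * a)) - τ) 0
          = max (b / a - τ) 0 + (-a * (b / a) ^ 2 + 2 * b * (b / a)) := hx.symm
        _ ≤ _ := le_ciSup hbdd (b / a)
    · push_neg at hc
      have h2 : (0:ℝ) < 1 / (4 * a) := by positivity
      set x₀ : ℝ := b / a + 1 / (2 * a) with hx₀
      have hx₀τ : 0 < x₀ - τ := by
        have : 1 / (4 * a) < 1 / (2 * a) := by
          rw [div_lt_div_iff₀ (by linarith) (by linarith)]; nlinarith
        simp only [hx₀]; linarith
      have hx : max (x₀ - τ) 0 + (-a * x₀ ^ 2 + 2 * b * x₀) =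
          b ^ 2 / a + max ((b / a + 1 / (4 * a)) - τ) 0 := by
        rw [max_eq_left hx₀τ.le, max_eq_left hc.le, hx₀]
        field_simp; ring
      calc b ^ 2 / a + max ((b / a + 1 / (4 * a)) - τ) 0
          = max (x₀ - τ) 0 + (-a * x₀ ^ 2 + 2 * b * x₀) := hx.symm
        _ ≤ _ := le_ciSup hbdd x₀
end

section
/- Let a > 1 and b, τ be real numbers, and define g₀(x) = -a x² + 2 b x. Then sup_{x ∈ ℝ} [ ((τ − x)₊)² + g₀(x) ] = b²/a + (a/(a−1)) · ( (τ − b/a)₊ )². -/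
/-- Lemma 3.5: for `a > 1`, with `g₀(x) = -a x² + 2 b x`,
`sup_x [((τ - x)₊)² + g₀(x)] = b²/a + (a/(a-1)) ((τ - b/a)₊)²`. -/
theorem stmt_10 (a b τ : ℝ) (ha : 1 < a) :
    (⨆ x : ℝ, (max (τ - x) 0) ^ 2 + (-a * x ^ 2 + 2 * b * x)) =
      b ^ 2 / a + a / (a - 1) * (max (τ - b / a) 0) ^ 2 := by
  have ha0 : (0:ℝ) < a := by linarith
  have ha1 : (0:ℝ) < a - 1 := by linarith
  set M := b ^ 2 / a + a / (a - 1) * (max (τ - b / a) 0) ^ 2 with hM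
  have hub : ∀ x : ℝ, (max (τ - x) 0) ^ 2 + (-a * x ^ 2 + 2 * b * x) ≤ M := by
    intro x
    rcases le_or_gt τ (b / a) with hc | hc
    · have hmax0 : max (τ - b / a) 0 = 0 := max_eq_right (by linarith)
      rw [hM, hmax0]
      have hgoal : b ^ 2 / a + a / (a - 1) * 0 ^ 2 = b ^ 2 / a := by ring
      rw [hgoal, le_div_iff₀ ha0]
      have h2 : a * τ ≤ b := by nlinarith [(le_div_iff₀ ha0).mp hc]
      rcases le_or_gt (τ - x) 0 with hx | hx
      · rw [max_eq_right hx]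
        nlinarith [sq_nonneg (a * x - b)]
      · rw [max_eq_left hx.le]
        have t1 := sq_nonneg (b - a * τ)
        have t2 : 0 ≤ a * (b - a * τ) * (τ - x) :=
          mul_nonneg (mul_nonneg ha0.le (by linarith)) hx.le
        have t3 : 0 ≤ a * (a - 1) * (τ - x) ^ 2 :=
          mul_nonneg (mul_nonneg ha0.le ha1.le) (sq_nonneg _)
        nlinarith [t1, t2, t3]
    · have hmax : max (τ - b / a) 0 = τ - b / a := max_eq_left (by linarith)
      have key : (τ - x) ^ 2 + (-a * x ^ 2 + 2 * b * x) ≤ M := by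
        rw [hM, hmax, ← sub_nonneg]
        have hid : b ^ 2 / a + a / (a - 1) * (τ - b / a) ^ 2 -
            ((τ - x) ^ 2 + (-a * x ^ 2 + 2 * b * x)) =
            ((a - 1) * x - (b - τ)) ^ 2 / (a - 1) := by
          field_simp
          ring
        rw [hid]
        positivity
      have hmle : (max (τ - x) 0) ^ 2 ≤ (τ - x) ^ 2 := by
        rcases le_or_gt (τ - x) 0 with h | h
        · rw [max_eq_right h]; simpa using sq_nonneg (τ - x)
        · rw [max_eq_left h.le]
      linarith
  have hbdd : BddAbove (Set.range fun x : ℝ => (max (τ - x) 0) ^ 2 + (-a * x ^ 2 + 2 * b * x)) :=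
    ⟨M, by rintro _ ⟨x, rfl⟩; exact hub x⟩
  apply le_antisymm (ciSup_le hub)
  rcases le_or_gt τ (b / a) with hc | hc
  · have hmax0 : max (τ - b / a) 0 = 0 := max_eq_right (by linarith)
    have : M = (max (τ - b/a) 0) ^ 2 + (-a * (b/a) ^ 2 + 2 * b * (b/a)) := by
      rw [hM, hmax0]; field_simp; ring
    calc M = (max (τ - b/a) 0) ^ 2 + (-a * (b/a) ^ 2 + 2 * b * (b/a)) := this
      _ ≤ _ := le_ciSup hbdd (b/a)
  · set x₀ := (b - τ)/(a-1) with hx₀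
    have hτx : τ - x₀ ≥ 0 := by
      rw [hx₀, ge_iff_le, sub_nonneg, div_le_iff₀ ha1]
      nlinarith [(div_lt_iff₀ ha0).mp hc]
    have hmax : max (τ - b / a) 0 = τ - b / a := max_eq_left (by linarith)
    have : M = (max (τ - x₀) 0) ^ 2 + (-a * x₀ ^ 2 + 2 * b * x₀) := by
      rw [hM, hmax, max_eq_left hτx, hx₀]
      field_simp
      ring
    calc M = (max (τ - x₀) 0) ^ 2 + (-a * x₀ ^ 2 + 2 * b * x₀) := this
      _ ≤ _ := le_ciSup hbdd x₀
end

section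
/- Let a > 1 and b, τ be real numbers, and define g₀(x) = -a x² + 2 b x. Then sup_{x ∈ ℝ} [ ((x − τ)₊)² + g₀(x) ] = b²/a + (a/(a−1)) · ( (b/a − τ)₊ )². -/
/-- Lemma 3.6: for `a > 1`, with `g₀(x) = -a x² + 2 b x`,
`sup_x [((x - τ)₊)² + g₀(x)] = b²/a + (a/(a-1)) ((b/a - τ)₊)²`. -/
theorem stmt_11 (a b τ : ℝ) (ha : 1 < a) :
    (⨆ x : ℝ, (max (x - τ) 0) ^ 2 + (-a * x ^ 2 + 2 * b * x)) =
      b ^ 2 / a + a / (a - 1) * (max (b / a - τ) 0) ^ 2 := by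
  have ha0 : (0:ℝ) < a := by linarith
  have ha1 : (0:ℝ) < a - 1 := by linarith
  set M := b ^ 2 / a + a / (a - 1) * (max (b / a - τ) 0) ^ 2 with hM
  have hub : ∀ x : ℝ, (max (x - τ) 0) ^ 2 + (-a * x ^ 2 + 2 * b * x) ≤ M := by
    intro x
    rcases le_or_gt (b / a) τ with h | h
    · have hba : b ≤ a * τ := by
        rw [div_le_iff₀ ha0] at h; linarith
      have hm : max (b / a - τ) 0 = 0 := max_eq_right (by linarith)
      rw [hM, hm]
      rcases le_or_gt x τ with hx | hx
      · rw [max_eq_right (by linarith : x - τ ≤ 0)]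
        have key : b ^ 2 / a + a / (a - 1) * 0 ^ 2 - (0 ^ 2 + (-a * x ^ 2 + 2 * b * x)) = (a * x - b) ^ 2 / a := by
          field_simp; ring
        rw [← sub_nonneg, key]
        positivity
      · rw [max_eq_left (by linarith : 0 ≤ x - τ)]
        rw [← sub_nonneg]
        have key : b ^ 2 / a + a / (a - 1) * 0 ^ 2 - ((x - τ) ^ 2 + (-a * x ^ 2 + 2 * b * x))
            = ((a * x - b) ^ 2 - a * (x - τ) ^ 2) / a := by
          field_simp; ring
        rw [key]
        apply div_nonneg _ ha0.le
        have h1 : a * (x - τ) ≤ a * x - b := by nlinarith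
        have h2 : 0 ≤ a * (x - τ) := by nlinarith
        nlinarith [sq_nonneg (x - τ)]
    · have hba : a * τ < b := by
        rw [lt_div_iff₀ ha0] at h; linarith
      have hm : max (b / a - τ) 0 = b / a - τ := max_eq_left (by linarith)
      rw [hM, hm]
      have hMeq : b ^ 2 / a + a / (a - 1) * (b / a - τ) ^ 2
          = τ ^ 2 + (b - τ) ^ 2 / (a - 1) := by
        field_simp; ring
      rw [hMeq]
      rcases le_or_gt x τ with hx | hx
      · rw [max_eq_right (by linarith : x - τ ≤ 0)]
        have h1 : -a * x ^ 2 + 2 * b * x ≤ b ^ 2 / a := by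
          rw [← sub_nonneg]
          have key : b ^ 2 / a - (-a * x ^ 2 + 2 * b * x) = (a * x - b) ^ 2 / a := by
            field_simp; ring
          rw [key]; positivity
        have h2 : b ^ 2 / a ≤ τ ^ 2 + (b - τ) ^ 2 / (a - 1) := by
          rw [← sub_nonneg]
          have key : τ ^ 2 + (b - τ) ^ 2 / (a - 1) - b ^ 2 / a
              = (b - a * τ) ^ 2 / (a * (a - 1)) := by
            field_simp; ring
          rw [key]; positivity
        norm_num; linarith
      · rw [max_eq_left (by linarith : 0 ≤ x - τ)]
        rw [← sub_nonneg]
        have key : τ ^ 2 + (b - τ) ^ 2 / (a - 1) - ((x - τ) ^ 2 + (-a * x ^ 2 + 2 * b * x))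
            = ((a - 1) * x - (b - τ)) ^ 2 / (a - 1) := by
          field_simp; ring
        rw [key]; positivity
  have hbdd : BddAbove (Set.range fun x : ℝ => (max (x - τ) 0) ^ 2 + (-a * x ^ 2 + 2 * b * x)) :=
    ⟨M, by rintro y ⟨x, rfl⟩; exact hub x⟩
  apply le_antisymm (ciSup_le hub)
  rcases le_or_gt (b / a) τ with h | h
  · have hm : max (b / a - τ) 0 = 0 := max_eq_right (by linarith)
    have hval : (max (b / a - τ) 0) ^ 2 + (-a * (b / a) ^ 2 + 2 * b * (b / a)) = M := by
      rw [hM, hm]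
      field_simp
      ring
    calc M = (max (b / a - τ) 0) ^ 2 + (-a * (b / a) ^ 2 + 2 * b * (b / a)) := hval.symm
      _ ≤ _ := le_ciSup hbdd (b / a)
  · have hm : max (b / a - τ) 0 = b / a - τ := max_eq_left (by linarith)
    set x₀ := (b - τ) / (a - 1) with hx₀
    have hx₀τ : τ ≤ x₀ := by
      rw [hx₀, le_div_iff₀ ha1]
      nlinarith [(lt_div_iff₀ ha0).mp h]
    have hval : (max (x₀ - τ) 0) ^ 2 + (-a * x₀ ^ 2 + 2 * b * x₀) = M := by
      rw [max_eq_left (by linarith), hM, hm, hx₀]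
      field_simp
      ring
    calc M = (max (x₀ - τ) 0) ^ 2 + (-a * x₀ ^ 2 + 2 * b * x₀) := hval.symm
      _ ≤ _ := le_ciSup hbdd x₀
end

section
/- Let μ, τ be real numbers and σ > 0. The supremum of E[(τ − X)₊] over all real-valued random variables X (equivalently, Borel probability measures on ℝ) satisfying E[X] = μ and E[X²] = σ² + μ² equals ( (τ − μ) + √(σ² + (μ − τ)²) ) / 2. -/
/-!
Writing `(τ - X)₊ = ((τ - X) + |τ - X|) / 2` and bounding `E|τ - X| ≤ √(E[(τ - X)²])` by
Cauchy–Schwarz gives the upper bound, since `E[(τ - X)²] = σ² + (μ - τ)²` is fixed by the moments.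
Equality in Cauchy–Schwarz forces `|τ - X|` to be constant, `s = √(σ² + (μ - τ)²)`, so the bound is
attained by the law on `{τ - s, τ + s}` whose weights give mean `μ`.
-/

open MeasureTheory ProbabilityTheory

lemma two_mul_max_zero {α : Type*} [Ring α] [LinearOrder α] [IsOrderedRing α] (a : α) :
    2 * max a 0 = a + |a| := by
  rcases le_total a 0 with h | h
  · simp [max_eq_right h, abs_of_nonpos h]
  · rw [max_eq_left h, abs_of_nonneg h, two_mul]

section Moments

variable {Ω : Type*} [MeasurableSpace Ω] {m : Measure Ω} [IsProbabilityMeasure m] {f : Ω → ℝ}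

lemma sq_integral_le_integral_sq (hf : MemLp f 2 m) : (∫ ω, f ω ∂m) ^ 2 ≤ ∫ ω, f ω ^ 2 ∂m := by
  have := variance_nonneg f m
  rw [variance_eq_sub hf] at this
  simpa using this

lemma integral_abs_le_sqrt_integral_sq (hf : MemLp f 2 m) :
    ∫ ω, |f ω| ∂m ≤ √(∫ ω, f ω ^ 2 ∂m) := by
  have h := sq_integral_le_integral_sq hf.abs
  simp only [Pi.abs_apply, sq_abs] at h
  exact (le_abs_self _).trans (Real.abs_le_sqrt h)

lemma integral_max_zero_le (hf : MemLp f 2 m) :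
    ∫ ω, max (f ω) 0 ∂m ≤ ((∫ ω, f ω ∂m) + √(∫ ω, f ω ^ 2 ∂m)) / 2 := by
  have hf1 : Integrable f m := hf.integrable one_le_two
  have hpos : (fun ω => max (f ω) 0) = fun ω => (f ω + |f ω|) / 2 := by
    funext ω; rw [← two_mul_max_zero]; ring
  rw [hpos, integral_div, integral_add hf1 hf1.abs]
  gcongr
  exact integral_abs_le_sqrt_integral_sq hf

lemma integral_const_sub_sq (hf : MemLp f 2 m) (c : ℝ) :
    ∫ ω, (c - f ω) ^ 2 ∂m = c ^ 2 - 2 * c * (∫ ω, f ω ∂m) + ∫ ω, f ω ^ 2 ∂m := by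
  have hf1 : Integrable f m := hf.integrable one_le_two
  have hlin : Integrable (fun ω => c ^ 2 - 2 * c * f ω) m :=
    (integrable_const _).sub (hf1.const_mul _)
  have hexp : (fun ω => (c - f ω) ^ 2) = fun ω => (c ^ 2 - 2 * c * f ω) + f ω ^ 2 := by
    funext ω; ring
  rw [hexp, integral_add hlin hf.integrable_sq, integral_sub (integrable_const _)
    (hf1.const_mul _), integral_const_mul, integral_const, probReal_univ, one_smul]

lemma integral_max_const_sub_le (hf : MemLp f 2 m) (c : ℝ) :
    ∫ ω, max (c - f ω) 0 ∂m ≤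
      ((c - ∫ ω, f ω ∂m) + √(c ^ 2 - 2 * c * (∫ ω, f ω ∂m) + ∫ ω, f ω ^ 2 ∂m)) / 2 := by
  have hcf : MemLp (fun ω => c - f ω) 2 m := (memLp_const c).sub hf
  have hmean : ∫ ω, (c - f ω) ∂m = c - ∫ ω, f ω ∂m := by
    rw [integral_sub (integrable_const c) (hf.integrable one_le_two), integral_const,
      probReal_univ, one_smul]
  simpa only [hmean, integral_const_sub_sq hf] using integral_max_zero_le hcf

end Moments

section TwoPoint

variable {α : Type*} [MeasurableSpace α]

noncomputable def twoPoint (p : ℝ) (a b : α) : Measure α :=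
  ENNReal.ofReal p • Measure.dirac a + ENNReal.ofReal (1 - p) • Measure.dirac b

variable {p : ℝ} {a b : α}

lemma isProbabilityMeasure_twoPoint (hp0 : 0 ≤ p) (hp1 : p ≤ 1) :
    IsProbabilityMeasure (twoPoint p a b) := by
  constructor
  simp only [twoPoint, Measure.add_apply, Measure.smul_apply, measure_univ, smul_eq_mul, mul_one]
  rw [← ENNReal.ofReal_add hp0 (sub_nonneg.2 hp1), add_sub_cancel, ENNReal.ofReal_one]

variable [MeasurableSingletonClass α]

lemma integrable_twoPoint (g : α → ℝ) : Integrable g (twoPoint p a b) :=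
  ((integrable_dirac enorm_lt_top).smul_measure ENNReal.ofReal_ne_top).add_measure
    ((integrable_dirac enorm_lt_top).smul_measure ENNReal.ofReal_ne_top)

lemma integral_twoPoint (hp0 : 0 ≤ p) (hp1 : p ≤ 1) (g : α → ℝ) :
    ∫ x, g x ∂(twoPoint p a b) = p * g a + (1 - p) * g b := by
  rw [twoPoint, integral_add_measure, integral_smul_measure, integral_smul_measure, integral_dirac,
    integral_dirac, ENNReal.toReal_ofReal hp0, ENNReal.toReal_ofReal (sub_nonneg.2 hp1),
    smul_eq_mul, smul_eq_mul]
  all_goals exact (integrable_dirac enorm_lt_top).smul_measure ENNReal.ofReal_ne_top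

end TwoPoint

lemma exists_twoPoint_scarf_extremal (μ τ σ : ℝ) (hσ : 0 < σ) :
    ∃ p a b : ℝ, 0 ≤ p ∧ p ≤ 1 ∧ p * a + (1 - p) * b = μ ∧
      p * a ^ 2 + (1 - p) * b ^ 2 = σ ^ 2 + μ ^ 2 ∧
      p * max (τ - a) 0 + (1 - p) * max (τ - b) 0 =
        ((τ - μ) + √(σ ^ 2 + (μ - τ) ^ 2)) / 2 := by
  set s := √(σ ^ 2 + (μ - τ) ^ 2)
  have hs2 : s ^ 2 = σ ^ 2 + (μ - τ) ^ 2 := Real.sq_sqrt (by positivity)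
  have hs : |τ - μ| < s := by
    rw [← Real.sqrt_sq_eq_abs]
    exact Real.sqrt_lt_sqrt (sq_nonneg _) (by nlinarith)
  have hspos : 0 < s := (abs_nonneg _).trans_lt hs
  obtain ⟨hlo, hhi⟩ := abs_lt.1 hs
  refine ⟨(s + (τ - μ)) / (2 * s), τ - s, τ + s,
    div_nonneg (by linarith) (by positivity), ?_, ?_, ?_, ?_⟩
  · rw [div_le_one (by positivity)]; linarith
  · field_simp; ring
  · field_simp; linear_combination (2 * s) * hs2
  · rw [sub_sub_cancel, sub_add_cancel_left, max_eq_left hspos.le,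
      max_eq_right (by linarith), mul_zero, add_zero]
    field_simp
    ring

/-- Sharp lower first partial moment (Scarf-type) bound (C3): the supremum of
`E[(τ - X)₊]` over Borel probability measures on `ℝ` with mean `μ` and second
moment `σ² + μ²` equals `((τ - μ) + √(σ² + (μ - τ)²)) / 2`. -/
theorem stmt_14 (μ τ σ : ℝ) (hσ : 0 < σ) :
    sSup {p : ℝ | ∃ m : Measure ℝ, IsProbabilityMeasure m ∧
        Integrable (fun x : ℝ => x) m ∧ Integrable (fun x : ℝ => x ^ 2) m ∧
        (∫ x, x ∂m) = μ ∧ (∫ x, x ^ 2 ∂m) = σ ^ 2 + μ ^ 2 ∧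
        p = ∫ x, max (τ - x) 0 ∂m} =
      ((τ - μ) + Real.sqrt (σ ^ 2 + (μ - τ) ^ 2)) / 2 := by
  obtain ⟨p, a, b, hp0, hp1, hmean, hsec, hval⟩ := exists_twoPoint_scarf_extremal μ τ σ hσ
  refine IsGreatest.csSup_eq ⟨⟨twoPoint p a b, isProbabilityMeasure_twoPoint hp0 hp1,
    integrable_twoPoint _, integrable_twoPoint _, ?_, ?_, ?_⟩, ?_⟩
  · rw [integral_twoPoint hp0 hp1, hmean]
  · rw [integral_twoPoint hp0 hp1, hsec]
  · rw [integral_twoPoint hp0 hp1, hval]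
  · rintro _ ⟨m, hm, h1, h2, hmean, hsec, rfl⟩
    have hX : MemLp (fun x : ℝ => x) 2 m :=
      (memLp_two_iff_integrable_sq h1.aestronglyMeasurable).2 h2
    calc ∫ x, max (τ - x) 0 ∂m
        ≤ ((τ - ∫ x, x ∂m) + √(τ ^ 2 - 2 * τ * (∫ x, x ∂m) + ∫ x, x ^ 2 ∂m)) / 2 :=
          integral_max_const_sub_le hX τ
      _ = ((τ - μ) + √(σ ^ 2 + (μ - τ) ^ 2)) / 2 := by
          rw [hmean, hsec]; ring_nf
end

section
/- Let μ, τ be real numbers and σ > 0. The supremum of E[((τ − X)₊)²] over all real-valued random variables X (equivalently, Borel probability measures on ℝ) satisfying E[X] = μ and E[X²] = σ² + μ² equals ((τ − μ)₊)² + σ². -/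
open MeasureTheory

lemma two_point_integrable (f : ℝ → ℝ) (a b p q : ℝ) :
    Integrable f (ENNReal.ofReal p • Measure.dirac a + ENNReal.ofReal q • Measure.dirac b) := by
  refine Integrable.add_measure ?_ ?_
  · exact ((integrable_const (f a)).congr (ae_eq_dirac f).symm).smul_measure ENNReal.ofReal_ne_top
  · exact ((integrable_const (f b)).congr (ae_eq_dirac f).symm).smul_measure ENNReal.ofReal_ne_top

lemma two_point_integral (f : ℝ → ℝ) (a b p q : ℝ) (hp : 0 ≤ p) (hq : 0 ≤ q) :
    ∫ x, f x ∂(ENNReal.ofReal p • Measure.dirac a + ENNReal.ofReal q • Measure.dirac b)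
      = p * f a + q * f b := by
  rw [integral_add_measure
      (((integrable_const (f a)).congr (ae_eq_dirac f).symm).smul_measure ENNReal.ofReal_ne_top)
      (((integrable_const (f b)).congr (ae_eq_dirac f).symm).smul_measure ENNReal.ofReal_ne_top),
    integral_smul_measure, integral_smul_measure,
    integral_congr_ae (ae_eq_dirac f), integral_congr_ae (ae_eq_dirac f)]
  simp [ENNReal.toReal_ofReal hp, ENNReal.toReal_ofReal hq, smul_eq_mul]

lemma two_point_prob (a b p q : ℝ) (hp : 0 ≤ p) (hq : 0 ≤ q) (hpq : p + q = 1) :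
    IsProbabilityMeasure
      (ENNReal.ofReal p • Measure.dirac a + ENNReal.ofReal q • Measure.dirac b) := by
  constructor
  simp [Measure.dirac_apply, ← ENNReal.ofReal_add hp hq, hpq]

lemma mem_S (μ τ σ : ℝ) (t : ℝ) (ht : 0 < t) :
    (1/(1+t^2) * (max (τ - (μ - σ*t)) 0)^2 + t^2/(1+t^2) * (max (τ - (μ + σ/t)) 0)^2) ∈
      {p : ℝ | ∃ m : Measure ℝ, IsProbabilityMeasure m ∧
        Integrable (fun x : ℝ => x) m ∧ Integrable (fun x : ℝ => x ^ 2) m ∧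
        (∫ x, x ∂m) = μ ∧ (∫ x, x ^ 2 ∂m) = σ ^ 2 + μ ^ 2 ∧
        p = ∫ x, (max (τ - x) 0) ^ 2 ∂m} := by
  have h1 : (0:ℝ) < 1 + t^2 := by positivity
  have hp : (0:ℝ) ≤ 1/(1+t^2) := by positivity
  have hq : (0:ℝ) ≤ t^2/(1+t^2) := by positivity
  have hpq : 1/(1+t^2) + t^2/(1+t^2) = 1 := by field_simp
  refine ⟨ENNReal.ofReal (1/(1+t^2)) • Measure.dirac (μ - σ*t)
      + ENNReal.ofReal (t^2/(1+t^2)) • Measure.dirac (μ + σ/t),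
    two_point_prob _ _ _ _ hp hq hpq,
    two_point_integrable _ _ _ _ _, two_point_integrable _ _ _ _ _, ?_, ?_, ?_⟩
  · rw [two_point_integral _ _ _ _ _ hp hq]; field_simp; ring
  · rw [two_point_integral _ _ _ _ _ hp hq]; field_simp; ring
  · rw [two_point_integral _ _ _ _ _ hp hq]

/-- Sharp lower second partial moment bound (C5): the supremum of `E[((τ - X)₊)²]`
over Borel probability measures on `ℝ` with mean `μ` and second moment `σ² + μ²`
equals `((τ - μ)₊)² + σ²`. -/
theorem stmt_16 (μ τ σ : ℝ) (hσ : 0 < σ) :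
    sSup {p : ℝ | ∃ m : Measure ℝ, IsProbabilityMeasure m ∧
        Integrable (fun x : ℝ => x) m ∧ Integrable (fun x : ℝ => x ^ 2) m ∧
        (∫ x, x ∂m) = μ ∧ (∫ x, x ^ 2 ∂m) = σ ^ 2 + μ ^ 2 ∧
        p = ∫ x, (max (τ - x) 0) ^ 2 ∂m} =
      (max (τ - μ) 0) ^ 2 + σ ^ 2 := by
  set S := {p : ℝ | ∃ m : Measure ℝ, IsProbabilityMeasure m ∧
        Integrable (fun x : ℝ => x) m ∧ Integrable (fun x : ℝ => x ^ 2) m ∧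
        (∫ x, x ∂m) = μ ∧ (∫ x, x ^ 2 ∂m) = σ ^ 2 + μ ^ 2 ∧
        p = ∫ x, (max (τ - x) 0) ^ 2 ∂m} with hS
  set c : ℝ := max (τ - μ) 0 with hc
  have hc0 : 0 ≤ c := le_max_right _ _
  have hcτ : τ - μ ≤ c := le_max_left _ _
  -- upper bound
  have hub : ∀ x ∈ S, x ≤ c^2 + σ^2 := by
    rintro x ⟨m, hm, hx1, hx2, hmean, hsq, rfl⟩
    have he : (fun x : ℝ => (c + μ - x)^2)
        = fun x => x^2 - (2*(c+μ))*x + (c+μ)^2 := by funext x; ring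
    have hgint : Integrable (fun x : ℝ => (c + μ - x)^2) m := by
      rw [he]; exact (hx2.sub (hx1.const_mul _)).add (integrable_const _)
    have hgval : ∫ x, (c + μ - x)^2 ∂m = c^2 + σ^2 := by
      have s3 : ∫ x, (x^2 - (2*(c+μ))*x + (c+μ)^2) ∂m
          = (∫ x, (x^2 - (2*(c+μ))*x) ∂m) + ∫ _x, (c+μ)^2 ∂m :=
        integral_add (hx2.sub (hx1.const_mul _)) (integrable_const _)
      have s1 : ∫ x, (x^2 - (2*(c+μ))*x) ∂m
          = (∫ x, x^2 ∂m) - ∫ x, (2*(c+μ))*x ∂m :=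
        integral_sub hx2 (hx1.const_mul _)
      have s2 : ∫ x, (2*(c+μ))*x ∂m = (2*(c+μ)) * ∫ x, x ∂m := integral_const_mul _ _
      have s4 : ∫ _x, ((c:ℝ)+μ)^2 ∂m = (c+μ)^2 := by
        rw [integral_const]; simp [measure_univ]
      rw [he, s3, s1, s2, s4, hmean, hsq]; ring
    calc ∫ x, (max (τ - x) 0)^2 ∂m ≤ ∫ x, (c + μ - x)^2 ∂m := by
          refine integral_mono_of_nonneg (ae_of_all _ fun x => by positivity) hgint
            (ae_of_all _ fun x => ?_)
          dsimp only
          rcases le_or_gt τ x with h | h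
          · rw [max_eq_right (by linarith)]
            simpa using sq_nonneg (c + μ - x)
          · rw [max_eq_left (by linarith)]
            nlinarith [hcτ, hc0]
      _ = c^2 + σ^2 := hgval
  have hne : S.Nonempty := ⟨_, mem_S μ τ σ 1 one_pos⟩
  have hbdd : BddAbove S := ⟨c^2 + σ^2, fun x hx => hub x hx⟩
  refine le_antisymm (Real.sSup_le hub (by positivity)) (le_of_forall_lt fun w hw => ?_)
  rw [lt_csSup_iff hbdd hne]
  rcases lt_or_ge μ τ with hμτ | hμτ
  · -- attained case
    have hd : 0 < τ - μ := by linarith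
    have ht : 0 < σ/(τ-μ) := div_pos hσ hd
    refine ⟨_, mem_S μ τ σ (σ/(τ-μ)) ht, ?_⟩
    have h1 : τ - (μ - σ*(σ/(τ-μ))) = (τ-μ) + σ^2/(τ-μ) := by
      field_simp; ring
    have h2 : τ - (μ + σ/(σ/(τ-μ))) = 0 := by
      have : σ/(σ/(τ-μ)) = τ - μ := by
        rw [div_div_eq_mul_div, mul_comm, mul_div_assoc, div_self hσ.ne', mul_one]
      rw [this]; ring
    have hval : 1/(1+(σ/(τ-μ))^2) * (max (τ - (μ - σ*(σ/(τ-μ)))) 0)^2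
        + (σ/(τ-μ))^2/(1+(σ/(τ-μ))^2) * (max (τ - (μ + σ/(σ/(τ-μ)))) 0)^2
        = c^2 + σ^2 := by
      rw [h1, h2, max_self, hc,
        max_eq_left (add_nonneg hd.le (div_nonneg (sq_nonneg σ) hd.le)),
        max_eq_left hd.le]
      field_simp
      ring
    rw [hval]; exact hw
  · -- limiting case
    have hB : c = 0 := max_eq_right (by linarith)
    have hw' : w < σ^2 := by rw [hB] at hw; simpa using hw
    have hσw : 0 < σ^2 - w := by linarith
    set t : ℝ := max (max 1 ((μ-τ)/σ)) ((σ^2 + 2*(μ-τ)*σ + 1)/(σ^2 - w)) with htdef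
    have t1 : (1:ℝ) ≤ t := le_trans (le_max_left _ _) (le_max_left _ _)
    have ht : 0 < t := lt_of_lt_of_le one_pos t1
    have t2 : (μ-τ)/σ ≤ t := le_trans (le_max_right _ _) (le_max_left _ _)
    have t3 : (σ^2 + 2*(μ-τ)*σ + 1)/(σ^2 - w) ≤ t := le_max_right _ _
    have t2' : μ - τ ≤ t * σ := by rwa [div_le_iff₀ hσ] at t2
    have t3' : σ^2 + 2*(μ-τ)*σ + 1 ≤ t * (σ^2 - w) := by rwa [div_le_iff₀ hσw] at t3
    refine ⟨_, mem_S μ τ σ t ht, ?_⟩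
    have h1t : (0:ℝ) < 1 + t^2 := by positivity
    have hm1 : max (τ - (μ - σ*t)) 0 = τ - (μ - σ*t) := max_eq_left (by nlinarith)
    have hm2 : max (τ - (μ + σ/t)) 0 = 0 := by
      have : 0 < σ/t := div_pos hσ ht
      exact max_eq_right (by linarith)
    rw [hm1, hm2]
    have key : w * (1 + t^2) < (τ - (μ - σ*t))^2 := by
      nlinarith [mul_le_mul_of_nonneg_left t3' (le_of_lt ht),
        mul_nonneg (sub_nonneg.mpr t1) (sq_nonneg σ),
        mul_nonneg (sub_nonneg.mpr t1) hσ.le, sq_nonneg (μ - τ)]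
    have e : 1/(1+t^2) * (τ - (μ - σ*t))^2 + t^2/(1+t^2) * (0:ℝ)^2
        = (τ - (μ - σ*t))^2 / (1+t^2) := by ring
    rw [e]
    exact (lt_div_iff₀ h1t).mpr key
end

section
/- Let μ, τ be real numbers and σ > 0. The supremum of E[((X − τ)₊)²] over all real-valued random variables X (equivalently, Borel probability measures on ℝ) satisfying E[X] = μ and E[X²] = σ² + μ² equals ((μ − τ)₊)² + σ². -/
/-!
For `a ≤ τ` one has `((x - τ)₊)² ≤ (x - a)²`; taking `a = μ - (μ - τ)₊` gives the upper bound
`E[(X - a)²] = σ² + (μ - τ)₊²`. It is approached by two-point laws with mean `μ` and variance `σ²`: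
an atom at `μ + t` of mass `σ² / (t² + σ²)` contributes about `σ²` as `t → ∞`, while the other atom
`μ - σ² / t` tends to `μ` and carries almost all the mass.
-/

open MeasureTheory Filter Topology

section TwoPoint

variable {α : Type*} [MeasurableSpace α]

noncomputable def twoPointMeasure (p : ℝ) (a b : α) : Measure α :=
  ENNReal.ofReal (1 - p) • Measure.dirac a + ENNReal.ofReal p • Measure.dirac b

lemma isProbabilityMeasure_twoPointMeasure {p : ℝ} (hp₀ : 0 ≤ p) (hp₁ : p ≤ 1) (a b : α) :
    IsProbabilityMeasure (twoPointMeasure p a b) := by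
  constructor
  simp [twoPointMeasure, ← ENNReal.ofReal_add (sub_nonneg.2 hp₁) hp₀]

variable [MeasurableSingletonClass α] {E : Type*} [NormedAddCommGroup E]

lemma integrable_twoPointMeasure (f : α → E) (p : ℝ) (a b : α) :
    Integrable f (twoPointMeasure p a b) :=
  ((integrable_dirac enorm_lt_top).smul_measure ENNReal.ofReal_ne_top).add_measure
    ((integrable_dirac enorm_lt_top).smul_measure ENNReal.ofReal_ne_top)

lemma integral_twoPointMeasure [NormedSpace ℝ E] [CompleteSpace E] (f : α → E) {p : ℝ}
    (hp₀ : 0 ≤ p) (hp₁ : p ≤ 1) (a b : α) :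
    ∫ x, f x ∂twoPointMeasure p a b = (1 - p) • f a + p • f b := by
  rw [twoPointMeasure, integral_add_measure
      ((integrable_dirac enorm_lt_top).smul_measure ENNReal.ofReal_ne_top)
      ((integrable_dirac enorm_lt_top).smul_measure ENNReal.ofReal_ne_top),
    integral_smul_measure, integral_smul_measure, integral_dirac, integral_dirac,
    ENNReal.toReal_ofReal (sub_nonneg.2 hp₁), ENNReal.toReal_ofReal hp₀]

end TwoPoint

section MeanVariance

noncomputable def meanVarTwoPoint (μ σ t : ℝ) : Measure ℝ :=
  twoPointMeasure (σ ^ 2 / (t ^ 2 + σ ^ 2)) (μ - σ ^ 2 / t) (μ + t)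

variable (μ σ t : ℝ)

lemma meanVarTwoPoint_weight_le_one : σ ^ 2 / (t ^ 2 + σ ^ 2) ≤ 1 :=
  div_le_one_of_le₀ (by nlinarith [sq_nonneg t]) (by positivity)

instance : IsProbabilityMeasure (meanVarTwoPoint μ σ t) :=
  isProbabilityMeasure_twoPointMeasure (by positivity)
    (meanVarTwoPoint_weight_le_one σ t) _ _

lemma integral_meanVarTwoPoint (f : ℝ → ℝ) :
    ∫ x, f x ∂meanVarTwoPoint μ σ t =
      (1 - σ ^ 2 / (t ^ 2 + σ ^ 2)) * f (μ - σ ^ 2 / t) + σ ^ 2 / (t ^ 2 + σ ^ 2) * f (μ + t) :=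
  integral_twoPointMeasure f (by positivity)
    (meanVarTwoPoint_weight_le_one σ t) _ _

variable {t}

lemma integral_id_meanVarTwoPoint (ht : t ≠ 0) : ∫ x, x ∂meanVarTwoPoint μ σ t = μ := by
  have : t ^ 2 + σ ^ 2 ≠ 0 := by positivity
  rw [integral_meanVarTwoPoint]
  field_simp
  ring

lemma integral_sq_meanVarTwoPoint (ht : t ≠ 0) :
    ∫ x, x ^ 2 ∂meanVarTwoPoint μ σ t = σ ^ 2 + μ ^ 2 := by
  have : t ^ 2 + σ ^ 2 ≠ 0 := by positivity
  rw [integral_meanVarTwoPoint]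
  field_simp
  ring

end MeanVariance

lemma tendsto_sq_add_div_sq_add (b s : ℝ) :
    Tendsto (fun t : ℝ => (t + b) ^ 2 / (t ^ 2 + s)) atTop (𝓝 1) := by
  have hb : Tendsto (fun t : ℝ => b / t) atTop (𝓝 0) := tendsto_const_nhds.div_atTop tendsto_id
  have hs : Tendsto (fun t : ℝ => s / t ^ 2) atTop (𝓝 0) :=
    tendsto_const_nhds.div_atTop (tendsto_pow_atTop two_ne_zero)
  have hlim := ((tendsto_const_nhds (x := (1 : ℝ)).add hb).pow 2).div
    (tendsto_const_nhds (x := (1 : ℝ)).add hs) (by norm_num)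
  rw [show ((1 : ℝ) + 0) ^ 2 / (1 + 0) = 1 by norm_num] at hlim
  refine hlim.congr' ?_
  filter_upwards [eventually_ne_atTop 0] with t ht
  simp only [Pi.div_apply]
  field_simp

lemma tendsto_integral_sq_posPart_meanVarTwoPoint (μ σ τ : ℝ) :
    Tendsto (fun t => ∫ x, max (x - τ) 0 ^ 2 ∂meanVarTwoPoint μ σ t) atTop
      (𝓝 (max (μ - τ) 0 ^ 2 + σ ^ 2)) := by
  simp_rw [integral_meanVarTwoPoint]
  have hweight : Tendsto (fun t : ℝ => σ ^ 2 / (t ^ 2 + σ ^ 2)) atTop (𝓝 0) :=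
    tendsto_const_nhds.div_atTop
      (tendsto_atTop_add_const_right _ _ (tendsto_pow_atTop (α := ℝ) two_ne_zero))
  have hlower : Tendsto (fun t : ℝ => max (μ - σ ^ 2 / t - τ) 0 ^ 2) atTop
      (𝓝 (max (μ - τ) 0 ^ 2)) := by
    have : Tendsto (fun t : ℝ => μ - σ ^ 2 / t) atTop (𝓝 μ) := by
      simpa using tendsto_const_nhds.sub ((tendsto_const_nhds (x := σ ^ 2)).div_atTop tendsto_id)
    exact ((this.sub_const τ).max tendsto_const_nhds).pow 2
  have hupper : Tendsto (fun t : ℝ => σ ^ 2 / (t ^ 2 + σ ^ 2) * max (μ + t - τ) 0 ^ 2) atTop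
      (𝓝 (σ ^ 2)) := by
    have := (tendsto_sq_add_div_sq_add (μ - τ) (σ ^ 2)).const_mul (σ ^ 2)
    rw [mul_one] at this
    refine this.congr' ?_
    filter_upwards [eventually_ge_atTop (τ - μ)] with t ht
    rw [max_eq_left (by linarith)]
    ring
  simpa using ((tendsto_const_nhds (x := (1 : ℝ)).sub hweight).mul hlower).add hupper

lemma sq_posPart_sub_le_sq_sub {a τ : ℝ} (h : a ≤ τ) (x : ℝ) : max (x - τ) 0 ^ 2 ≤ (x - a) ^ 2 := by
  rcases le_or_gt (x - τ) 0 with hx | hx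
  · rw [max_eq_right hx, sq, zero_mul]
    positivity
  · rw [max_eq_left hx.le]
    nlinarith

section SecondMoment

variable {m : Measure ℝ} [IsProbabilityMeasure m]
  (hx : Integrable (fun x : ℝ => x) m) (hx2 : Integrable (fun x : ℝ => x ^ 2) m)
include hx hx2

lemma integrable_sub_sq (a : ℝ) : Integrable (fun x : ℝ => (x - a) ^ 2) m := by
  simp_rw [sub_sq']
  exact (hx2.add (integrable_const (a ^ 2))).sub (hx.const_mul _ |>.mul_const _)

lemma integral_sub_sq (a : ℝ) :
    ∫ x, (x - a) ^ 2 ∂m = ∫ x, x ^ 2 ∂m - 2 * a * ∫ x, x ∂m + a ^ 2 := by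
  simp_rw [sub_sq']
  have hx2a : Integrable (fun x : ℝ => x ^ 2 + a ^ 2) m := hx2.add (integrable_const _)
  rw [integral_sub hx2a (hx.const_mul _ |>.mul_const _),
    integral_add hx2 (integrable_const _), integral_mul_const, integral_const_mul, integral_const,
    probReal_univ, one_smul]
  ring

lemma integral_sq_posPart_sub_le (τ : ℝ) :
    ∫ x, max (x - τ) 0 ^ 2 ∂m ≤
      max (∫ x, x ∂m - τ) 0 ^ 2 + (∫ x, x ^ 2 ∂m - (∫ x, x ∂m) ^ 2) := by
  set c := max (∫ x, x ∂m - τ) 0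
  have ha : ∫ x, x ∂m - c ≤ τ := by linarith [le_max_left (∫ x, x ∂m - τ) 0]
  calc ∫ x, max (x - τ) 0 ^ 2 ∂m ≤ ∫ x, (x - (∫ x, x ∂m - c)) ^ 2 ∂m :=
        integral_mono_of_nonneg (ae_of_all _ fun x => by positivity) (integrable_sub_sq hx hx2 _)
          (ae_of_all _ (sq_posPart_sub_le_sq_sub ha))
    _ = c ^ 2 + (∫ x, x ^ 2 ∂m - (∫ x, x ∂m) ^ 2) := by
        rw [integral_sub_sq hx hx2]
        ring

end SecondMoment

theorem stmt_17_general (μ τ σ : ℝ) :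
    sSup {p : ℝ | ∃ m : Measure ℝ, IsProbabilityMeasure m ∧
        Integrable (fun x : ℝ => x) m ∧ Integrable (fun x : ℝ => x ^ 2) m ∧
        (∫ x, x ∂m) = μ ∧ (∫ x, x ^ 2 ∂m) = σ ^ 2 + μ ^ 2 ∧
        p = ∫ x, (max (x - τ) 0) ^ 2 ∂m} =
      (max (μ - τ) 0) ^ 2 + σ ^ 2 := by
  have hmem : ∀ t ≠ 0, ∃ m : Measure ℝ, IsProbabilityMeasure m ∧
      Integrable (fun x : ℝ => x) m ∧ Integrable (fun x : ℝ => x ^ 2) m ∧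
      (∫ x, x ∂m) = μ ∧ (∫ x, x ^ 2 ∂m) = σ ^ 2 + μ ^ 2 ∧
      ∫ x, max (x - τ) 0 ^ 2 ∂meanVarTwoPoint μ σ t = ∫ x, max (x - τ) 0 ^ 2 ∂m :=
    fun t ht => ⟨meanVarTwoPoint μ σ t, inferInstance, integrable_twoPointMeasure _ _ _ _,
      integrable_twoPointMeasure _ _ _ _, integral_id_meanVarTwoPoint μ σ ht,
      integral_sq_meanVarTwoPoint μ σ ht, rfl⟩
  refine csSup_eq_of_forall_le_of_forall_lt_exists_gt ⟨_, hmem 1 one_ne_zero⟩ ?_ ?_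
  · rintro p ⟨m, _, hx, hx2, hmean, hsq, rfl⟩
    simpa [hmean, hsq] using integral_sq_posPart_sub_le hx hx2 τ
  · intro w hw
    obtain ⟨t, hwt, ht⟩ := ((tendsto_integral_sq_posPart_meanVarTwoPoint μ σ τ).eventually
      (eventually_gt_nhds hw) |>.and (eventually_ne_atTop 0)).exists
    exact ⟨_, hmem t ht, hwt⟩

/-- Sharp upper second partial moment bound (C6): the supremum of `E[((X - τ)₊)²]`
over Borel probability measures on `ℝ` with mean `μ` and second moment `σ² + μ²`
equals `((μ - τ)₊)² + σ²`. -/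
theorem stmt_17 (μ τ σ : ℝ) (hσ : 0 < σ) :
    sSup {p : ℝ | ∃ m : Measure ℝ, IsProbabilityMeasure m ∧
        Integrable (fun x : ℝ => x) m ∧ Integrable (fun x : ℝ => x ^ 2) m ∧
        (∫ x, x ∂m) = μ ∧ (∫ x, x ^ 2 ∂m) = σ ^ 2 + μ ^ 2 ∧
        p = ∫ x, (max (x - τ) 0) ^ 2 ∂m} =
      (max (μ - τ) 0) ^ 2 + σ ^ 2 :=
  stmt_17_general μ τ σ
end

section
/- Let λ₁ ≥ 0, λ₂, λ₃, τ, xᵢ be real numbers and set ξ = λ₁ + λ₃ with ξ > 0. Then sup_{x ∈ ℝ} [ (τ − x)₊ − λ₁ (x − xᵢ)² − λ₂ x − λ₃ x² ] equals −λ₁ xᵢ² plus: (2λ₁xᵢ − λ₂)²/(4ξ) if τ ≤ (4λ₁xᵢ − 2λ₂ − 1)/(4ξ), and τ + (2λ₁xᵢ − λ₂ − 1)²/(4ξ) if τ > (4λ₁xᵢ − 2λ₂ − 1)/(4ξ). -/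
/-- Proposition 2.4 (dual integrand for LFPM): for `l₁ ≥ 0`, `ξ = l₁ + l₃ > 0`, the
supremum over `x ∈ ℝ` of `(τ - x)₊ - l₁ (x - xᵢ)² - l₂ x - l₃ x²` equals `-l₁ xᵢ²`
plus a two-case piecewise expression in `τ`. -/
theorem stmt_19 (l₁ l₂ l₃ τ xi ξ : ℝ) (hl₁ : 0 ≤ l₁) (hξdef : ξ = l₁ + l₃)
    (hξ : 0 < ξ) :
    (⨆ x : ℝ, max (τ - x) 0 - l₁ * (x - xi) ^ 2 - l₂ * x - l₃ * x ^ 2) =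
      -l₁ * xi ^ 2 +
        (if τ ≤ (4 * l₁ * xi - 2 * l₂ - 1) / (4 * ξ) then
          (2 * l₁ * xi - l₂) ^ 2 / (4 * ξ)
        else τ + (2 * l₁ * xi - l₂ - 1) ^ 2 / (4 * ξ)) := by
  subst hξdef
  have hξ' : (l₁ + l₃) ≠ 0 := ne_of_gt hξ
  set M : ℝ := -l₁ * xi ^ 2 +
        (if τ ≤ (4 * l₁ * xi - 2 * l₂ - 1) / (4 * (l₁ + l₃)) then
          (2 * l₁ * xi - l₂) ^ 2 / (4 * (l₁ + l₃))
        else τ + (2 * l₁ * xi - l₂ - 1) ^ 2 / (4 * (l₁ + l₃))) with hM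
  have key : ∀ x : ℝ, max (τ - x) 0 - l₁ * (x - xi) ^ 2 - l₂ * x - l₃ * x ^ 2 ≤ M := by
    intro x
    rw [hM]
    have hD : (0:ℝ) < 4 * (l₁ + l₃) := by positivity
    have e1 : (2 * l₁ * xi - l₂) ^ 2 / (4 * (l₁ + l₃)) * (4 * (l₁ + l₃))
        = (2 * l₁ * xi - l₂) ^ 2 := div_mul_cancel₀ _ (ne_of_gt hD)
    have e2 : (2 * l₁ * xi - l₂ - 1) ^ 2 / (4 * (l₁ + l₃)) * (4 * (l₁ + l₃))
        = (2 * l₁ * xi - l₂ - 1) ^ 2 := div_mul_cancel₀ _ (ne_of_gt hD)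
    rcases le_total (τ - x) 0 with h | h
    · rw [max_eq_right h]
      split_ifs with ht
      · nlinarith [sq_nonneg (2*(l₁+l₃)*x - (2*l₁*xi - l₂)), e1, hξ]
      · push_neg at ht
        have ht' : 4 * l₁ * xi - 2 * l₂ - 1 < τ * (4 * (l₁ + l₃)) := by
          rwa [div_lt_iff₀ hD] at ht
        nlinarith [sq_nonneg (2*(l₁+l₃)*x - (2*l₁*xi - l₂)),
          sq_nonneg (2*(l₁+l₃)*x - (2*l₁*xi - l₂ - 1)), e1, e2, hξ]
    · rw [max_eq_left h]
      split_ifs with ht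
      · have ht' : τ * (4 * (l₁ + l₃)) ≤ 4 * l₁ * xi - 2 * l₂ - 1 := by
          rwa [le_div_iff₀ hD] at ht
        nlinarith [sq_nonneg (2*(l₁+l₃)*x - (2*l₁*xi - l₂ - 1)), e1, e2, hξ]
      · nlinarith [sq_nonneg (2*(l₁+l₃)*x - (2*l₁*xi - l₂ - 1)), e2, hξ]
  have hbdd : BddAbove (Set.range fun x : ℝ =>
      max (τ - x) 0 - l₁ * (x - xi) ^ 2 - l₂ * x - l₃ * x ^ 2) :=
    ⟨M, by rintro _ ⟨x, rfl⟩; exact key x⟩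
  refine le_antisymm (ciSup_le key) ?_
  rw [hM]
  split_ifs with ht
  · refine le_ciSup_of_le hbdd ((2*l₁*xi - l₂)/(2*(l₁+l₃))) ?_
    have h0 : (0:ℝ) ≤ max (τ - (2*l₁*xi - l₂)/(2*(l₁+l₃))) 0 := le_max_right _ _
    have heq : - l₁ * ((2*l₁*xi - l₂)/(2*(l₁+l₃)) - xi) ^ 2 - l₂ * ((2*l₁*xi - l₂)/(2*(l₁+l₃))) - l₃ * ((2*l₁*xi - l₂)/(2*(l₁+l₃))) ^ 2
        = -l₁ * xi ^ 2 + (2 * l₁ * xi - l₂) ^ 2 / (4 * (l₁ + l₃)) := by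
      field_simp
      ring
    linarith
  · refine le_ciSup_of_le hbdd ((2*l₁*xi - l₂ - 1)/(2*(l₁+l₃))) ?_
    push_neg at ht
    rw [div_lt_iff₀ (by positivity)] at ht
    have h0 : τ - (2*l₁*xi - l₂ - 1)/(2*(l₁+l₃)) ≤ max (τ - (2*l₁*xi - l₂ - 1)/(2*(l₁+l₃))) 0 := le_max_left _ _
    have heq : τ - (2*l₁*xi - l₂ - 1)/(2*(l₁+l₃)) - l₁ * ((2*l₁*xi - l₂ - 1)/(2*(l₁+l₃)) - xi) ^ 2 - l₂ * ((2*l₁*xi - l₂ - 1)/(2*(l₁+l₃))) - l₃ * ((2*l₁*xi - l₂ - 1)/(2*(l₁+l₃))) ^ 2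
        = -l₁ * xi ^ 2 + (τ + (2 * l₁ * xi - l₂ - 1) ^ 2 / (4 * (l₁ + l₃))) := by
      field_simp
      ring
    linarith
end
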